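/- arXiv:2602.03277 — 2 statements merged into one kernel-verified Lean document; each statement's English description precedes it below -/
import Mathlib

section
/- The BlockRR transition probabilities are valid probabilities: β > 0 and γ ≥ 0. -/
/-!
Write `a = (e^ε - 1) b > 0`. Expanding with `s = s₁ + s₂` gives `κ = a² + a s + l s₂ > 0`, while
`β₁ = a + l s₂ / s > 0` and `γ₁ = (a (s - l) + l s₂) / s ≥ 0` because `l ≤ s₁ ≤ s`.
-/

namespace BlockRR

lemma kappa_eq (t b s₁ s₂ l : ℝ) :
    (t * b + s₁ - b) * (t * b + s₂ - b) - (s₁ - l) * s₂ =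
      ((t - 1) * b) ^ 2 + (t - 1) * b * (s₁ + s₂) + l * s₂ := by
  ring

lemma gamma_numerator_eq {a s₁ s₂ l : ℝ} (hs : s₁ + s₂ ≠ 0) :
    (a + l) - l / (s₁ + s₂) * (a + s₁) = (a * (s₁ + s₂ - l) + l * s₂) / (s₁ + s₂) := by
  field_simp
  ring

variable {a s₁ s₂ l : ℝ}

lemma kappa_pos (ha : 0 < a) (hl0 : 0 ≤ l) (hs₂ : 0 ≤ s₂) (hs : 0 ≤ s₁ + s₂) :
    0 < a ^ 2 + a * (s₁ + s₂) + l * s₂ := by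
  positivity

lemma beta_numerator_pos (ha : 0 < a) (hl0 : 0 ≤ l) (hs₂ : 0 ≤ s₂) (hs : 0 ≤ s₁ + s₂) :
    0 < a + l * s₂ / (s₁ + s₂) := by
  positivity

lemma gamma_numerator_nonneg (ha : 0 ≤ a) (hs₂ : 0 ≤ s₂) (hl0 : 0 ≤ l) (hl : l ≤ s₁)
    (hs : 0 < s₁ + s₂) :
    0 ≤ (a + l) - l / (s₁ + s₂) * (a + s₁) := by
  rw [gamma_numerator_eq hs.ne']
  have hls : 0 ≤ s₁ + s₂ - l := by linarith
  positivity

end BlockRR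

open BlockRR in
theorem blockRR_valid_probs_general
    (ε b s₁ s₂ l : ℝ) (hε : 0 < ε) (hb : 1 ≤ b) (hs₂ : 0 ≤ s₂)
    (hl0 : 0 ≤ l) (hl : l ≤ s₁) (hs : 1 ≤ s₁ + s₂)
    (s κ β₁ γ₁ β γ : ℝ)
    (hsdef : s = s₁ + s₂)
    (hκ : κ = (Real.exp ε * b + s₁ - b) * (Real.exp ε * b + s₂ - b) - (s₁ - l) * s₂)
    (hβ₁ : β₁ = (Real.exp ε - 1) * b + l * s₂ / s)
    (hγ₁ : γ₁ = ((Real.exp ε - 1) * b + l) - (l / s) * ((Real.exp ε - 1) * b + s₁))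
    (hβ : β = β₁ / κ) (hγ : γ = γ₁ / κ)
    :
    0 < β ∧ 0 ≤ γ := by
  have ha : 0 < (Real.exp ε - 1) * b :=
    mul_pos (sub_pos.2 (Real.one_lt_exp_iff.2 hε)) (by linarith)
  have hs_pos : 0 < s₁ + s₂ := by linarith
  have hκ_pos : 0 < κ := by
    rw [hκ, kappa_eq]
    exact kappa_pos ha hl0 hs₂ hs_pos.le
  subst hsdef hβ₁ hγ₁ hβ hγ
  exact ⟨div_pos (beta_numerator_pos ha hl0 hs₂ hs_pos.le) hκ_pos,
    div_nonneg (gamma_numerator_nonneg ha.le hs₂ hl0 hl hs_pos) hκ_pos.le⟩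

theorem blockRR_valid_probs
    (ε b s₁ s₂ l : ℝ) (hε : 0 < ε) (hb : 1 ≤ b) (hs₁ : 0 ≤ s₁) (hs₂ : 0 ≤ s₂)
    (hl0 : 0 ≤ l) (hl : l ≤ s₁) (hs : 1 ≤ s₁ + s₂)
    (s κ β₁ γ₁ β γ : ℝ)
    (hsdef : s = s₁ + s₂)
    (hκ : κ = (Real.exp ε * b + s₁ - b) * (Real.exp ε * b + s₂ - b) - (s₁ - l) * s₂)
    (hβ₁ : β₁ = (Real.exp ε - 1) * b + l * s₂ / s)
    (hγ₁ : γ₁ = ((Real.exp ε - 1) * b + l) - (l / s) * ((Real.exp ε - 1) * b + s₁))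
    (hβ : β = β₁ / κ) (hγ : γ = γ₁ / κ)
    :
    0 < β ∧ 0 ≤ γ :=
  blockRR_valid_probs_general ε b s₁ s₂ l hε hb hs₂ hl0 hl hs s κ β₁ γ₁ β γ hsdef hκ hβ₁ hγ₁ hβ hγ
end

section
/- (Feasibility bound for majority labels, inequality (5)) For every y ∈ S₁ with B(y) ⊆ S̃₁, any feasible conditional distribution p for BlockRR's optimization problem satisfies ∑_{ỹ ∈ B(y)} p(y, ỹ) + e^{−ε} · ∑_{ỹ ∈ S̃₁ \ B(y)} p(ỹ, ỹ) + e^{−ε} · ∑_{ỹ ∈ S̃₂} p(ỹ, ỹ) ≤ 1. -/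
/-!
The row of `y` sums to `1` over `T₁ ∪ T₂`. Off `B y` each entry `p y z` is at least
`e^{-ε} p z z` by the DP constraint between the rows of `z` and `y`, and since `B y ⊆ T₁` the
complement of `B y` splits as `(T₁ \ B y) ∪ T₂`.
-/

open Finset

lemma exp_neg_mul_le_of_le_exp_mul {ε a b : ℝ} (h : a ≤ Real.exp ε * b) :
    Real.exp (-ε) * a ≤ b := by
  rw [Real.exp_neg, inv_mul_le_iff₀ (Real.exp_pos ε)]
  exact h

lemma sum_add_exp_neg_mul_sum_diag_le_one {α : Type*} [DecidableEq α] {T A : Finset α}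
    {p : α → α → ℝ} {y : α} {ε : ℝ} (hA : A ⊆ T) (hsum : ∑ z ∈ T, p y z = 1)
    (hdp : ∀ z ∈ T \ A, p z z ≤ Real.exp ε * p y z) :
    ∑ z ∈ A, p y z + Real.exp (-ε) * ∑ z ∈ T \ A, p z z ≤ 1 := by
  have hdiag : Real.exp (-ε) * ∑ z ∈ T \ A, p z z ≤ ∑ z ∈ T \ A, p y z := by
    rw [mul_sum]
    exact sum_le_sum fun z hz => exp_neg_mul_le_of_le_exp_mul (hdp z hz)
  calc ∑ z ∈ A, p y z + Real.exp (-ε) * ∑ z ∈ T \ A, p z z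
      ≤ ∑ z ∈ A, p y z + ∑ z ∈ T \ A, p y z := by gcongr
    _ = 1 := by rw [add_comm, sum_sdiff hA, hsum]

theorem blockRR_feasibility_majority_general {α : Type*} [DecidableEq α]
    (S₁ S₂ T₁ T₂ : Finset α)
    (hT : Disjoint T₁ T₂)
    (hsub : T₁ ∪ T₂ ⊆ S₁ ∪ S₂)
    (ε : ℝ)
    (B : α → Finset α)
    (p : α → α → ℝ)
    (hsum : ∀ y ∈ S₁ ∪ S₂, ∑ z ∈ T₁ ∪ T₂, p y z = 1)
    (hdp : ∀ y ∈ S₁ ∪ S₂, ∀ y' ∈ S₁ ∪ S₂, ∀ z ∈ T₁ ∪ T₂,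
      p y z ≤ Real.exp ε * p y' z) :
    ∀ y ∈ S₁, B y ⊆ T₁ →
      ∑ z ∈ B y, p y z
        + Real.exp (-ε) * ∑ z ∈ T₁ \ B y, p z z
        + Real.exp (-ε) * ∑ z ∈ T₂, p z z ≤ 1 := by
  intro y hy hBy
  have hyS : y ∈ S₁ ∪ S₂ := mem_union_left _ hy
  have hbound := sum_add_exp_neg_mul_sum_diag_le_one (hBy.trans subset_union_left) (hsum y hyS)
    fun z hz => hdp z (hsub (mem_sdiff.mp hz).1) y hyS z (mem_sdiff.mp hz).1
  have hT₂ : T₂ \ B y = T₂ := (hT.mono_left hBy).symm.sdiff_eq_left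
  rw [union_sdiff_distrib, hT₂, sum_union (hT.mono_left sdiff_subset), mul_add,
    ← add_assoc] at hbound
  exact hbound

/-- Feasibility bound (inequality (5)) for majority labels `y ∈ S₁` with `B y ⊆ T₁`. -/
theorem blockRR_feasibility_majority {α : Type*} [DecidableEq α]
    (S₁ S₂ T₁ T₂ Δ : Finset α)
    (hS : Disjoint S₁ S₂) (hT : Disjoint T₁ T₂)
    (hsub : T₁ ∪ T₂ ⊆ S₁ ∪ S₂) (hTcard : 1 ≤ (T₁ ∪ T₂).card)
    (hΔ : Δ ⊆ T₁)
    (ε : ℝ) (hε : 0 < ε)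
    (B : α → Finset α)
    (hB : ∀ y ∈ S₂, B y ⊆ T₁ ∪ T₂ ∧ Disjoint (B y) Δ)
    (p : α → α → ℝ)
    (hnn : ∀ y ∈ S₁ ∪ S₂, ∀ z ∈ T₁ ∪ T₂, 0 ≤ p y z)
    (hsum : ∀ y ∈ S₁ ∪ S₂, ∑ z ∈ T₁ ∪ T₂, p y z = 1)
    (hdp : ∀ y ∈ S₁ ∪ S₂, ∀ y' ∈ S₁ ∪ S₂, ∀ z ∈ T₁ ∪ T₂,
      p y z ≤ Real.exp ε * p y' z)
    (hΔp : ∀ y ∈ S₂, ∀ z ∈ Δ, p y z = 1 / (T₁ ∪ T₂).card) :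
    ∀ y ∈ S₁, B y ⊆ T₁ →
      ∑ z ∈ B y, p y z
        + Real.exp (-ε) * ∑ z ∈ T₁ \ B y, p z z
        + Real.exp (-ε) * ∑ z ∈ T₂, p z z ≤ 1 :=
  blockRR_feasibility_majority_general S₁ S₂ T₁ T₂ hT hsub ε B p hsum hdp
end
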